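/- arXiv:2111.00587 — 2 statements merged into one kernel-verified Lean document; each statement's English description precedes it below -/
import Mathlib

section
/- (Existence of the t-SVDM for order-p tensors.) Fix invertible matrices M₃ ∈ ℝ^{n₃×n₃},…,M_p ∈ ℝ^{n_p×n_p}. Every order-p real tensor A ∈ ℝ^{n₁×n₂×⋯×n_p} admits a factorization A = U ⋆M S ⋆M Vᵀ in which U ∈ ℝ^{n₁×n₁×n₃×⋯×n_p} and V ∈ ℝ^{n₂×n₂×n₃×⋯×n_p} are ⋆M-orthogonal and S ∈ ℝ^{n₁×n₂×n₃×⋯×n_p} is f-diagonal, with every frontal slice of Ŝ a diagonal matrix whose diagonal entries are nonnegative and arranged in descending order. -/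
/-!
The transform `A ↦ Â` is invertible, turns `⋆M` into the facewise product and the `⋆M`-transpose
into the slicewise transpose, so a t-SVDM is obtained by taking a matrix SVD `Â i = Uᵢ Σᵢ Vᵢᵀ` of
every frontal slice of `Â` and transforming `U`, `Σ`, `V` back.

The matrix SVD of `B` comes from an orthonormal eigenbasis `(v j)` of `BᴴB`, ordered by decreasing
eigenvalue: the vectors `B v j` are pairwise orthogonal with `‖B v j‖ = σ j`, and only the first
`rank B ≤ n₁` of them are nonzero. Normalised, these extend to an orthonormal basis `(u i)`, and
then `⟪u i, B v j⟫` is the rectangular diagonal matrix of the singular values.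
-/

open Matrix

/-!
Order-`p` real tensors (`p = q + 2`) are represented as families of frontal
slices: a tensor `A ∈ ℝ^{n₁ × n₂ × n₃ × ⋯ × n_p}` is a function
`A : TI m → Matrix (Fin n₁) (Fin n₂) ℝ`, where `TI m = ∀ k : Fin q, Fin (m k)`
is the trailing multi-index `(i₃, …, i_p)` and `A i` is the frontal slice
`A(:,:,i₃,…,i_p)`.
-/

namespace TSVDM

variable {q : ℕ} {m : Fin q → ℕ}

/-- Trailing multi-index `(i₃, …, i_p)`. -/
abbrev TI (m : Fin q → ℕ) : Type := ∀ k, Fin (m k)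

/-- Transform-domain tensor `Â = A ×₃ M₃ ×₄ M₄ ⋯ ×_p M_p`
(mode-`k` products along all trailing modes). -/
noncomputable def hat (M : ∀ k, Matrix (Fin (m k)) (Fin (m k)) ℝ) {a b : Type}
    (A : TI m → Matrix a b ℝ) : TI m → Matrix a b ℝ :=
  fun i => ∑ j : TI m, (∏ k, M k (i k) (j k)) • A j

/-- Inverse transform `×₃ M₃⁻¹ ×₄ M₄⁻¹ ⋯ ×_p M_p⁻¹`. -/
noncomputable def unhat (M : ∀ k, Matrix (Fin (m k)) (Fin (m k)) ℝ) {a b : Type}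
    (A : TI m → Matrix a b ℝ) : TI m → Matrix a b ℝ :=
  fun i => ∑ j : TI m, (∏ k, (M k)⁻¹ (i k) (j k)) • A j

/-- The `⋆M`-product: `A ⋆M B = (Â △ B̂) ×₃ M₃⁻¹ ⋯ ×_p M_p⁻¹`, where `△` is the
facewise product (slice-wise matrix multiplication). -/
noncomputable def starM (M : ∀ k, Matrix (Fin (m k)) (Fin (m k)) ℝ)
    {a b c : Type} [Fintype b]
    (A : TI m → Matrix a b ℝ) (B : TI m → Matrix b c ℝ) : TI m → Matrix a c ℝ :=
  unhat M (fun i => hat M A i * hat M B i)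

/-- The `⋆M`-transpose: transpose every transform-domain frontal slice. -/
noncomputable def transM (M : ∀ k, Matrix (Fin (m k)) (Fin (m k)) ℝ) {a b : Type}
    (A : TI m → Matrix a b ℝ) : TI m → Matrix b a ℝ :=
  unhat M (fun i => (hat M A i)ᵀ)

/-- The `⋆M`-identity: all transform-domain frontal slices equal the identity matrix. -/
noncomputable def idM (M : ∀ k, Matrix (Fin (m k)) (Fin (m k)) ℝ)
    (a : Type) [DecidableEq a] : TI m → Matrix a a ℝ :=
  unhat M (fun _ => (1 : Matrix a a ℝ))

/-- `Q` is `⋆M`-orthogonal if `Qᵀ ⋆M Q = Q ⋆M Qᵀ = I`. -/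
def IsStarMOrthogonal (M : ∀ k, Matrix (Fin (m k)) (Fin (m k)) ℝ)
    {a : Type} [Fintype a] [DecidableEq a] (Q : TI m → Matrix a a ℝ) : Prop :=
  starM M (transM M Q) Q = idM M a ∧ starM M Q (transM M Q) = idM M a

/-- Frobenius norm of a tensor. -/
noncomputable def frob {a b : Type} [Fintype a] [Fintype b]
    (A : TI m → Matrix a b ℝ) : ℝ :=
  Real.sqrt (∑ i : TI m, ∑ r : a, ∑ c : b, A i r c ^ 2)

/-- Diagonal position `(j, j)`: row index. -/
def dIdx₁ {n₁ n₂ : ℕ} (j : Fin (min n₁ n₂)) : Fin n₁ :=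
  ⟨j.1, lt_of_lt_of_le j.2 (Nat.min_le_left n₁ n₂)⟩

/-- Diagonal position `(j, j)`: column index. -/
def dIdx₂ {n₁ n₂ : ℕ} (j : Fin (min n₁ n₂)) : Fin n₂ :=
  ⟨j.1, lt_of_lt_of_le j.2 (Nat.min_le_right n₁ n₂)⟩

/-- `A = U ⋆M S ⋆M Vᵀ` is a t-SVDM of `A`: `U`, `V` are `⋆M`-orthogonal, `S` is
f-diagonal (each transform-domain frontal slice is diagonal), and the diagonal
entries of each frontal slice of `Ŝ` are nonnegative and in descending order. -/
structure IsTSVDM (M : ∀ k, Matrix (Fin (m k)) (Fin (m k)) ℝ) {n₁ n₂ : ℕ}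
    (A : TI m → Matrix (Fin n₁) (Fin n₂) ℝ)
    (U : TI m → Matrix (Fin n₁) (Fin n₁) ℝ)
    (S : TI m → Matrix (Fin n₁) (Fin n₂) ℝ)
    (V : TI m → Matrix (Fin n₂) (Fin n₂) ℝ) : Prop where
  decomp : A = starM M (starM M U S) (transM M V)
  orthU : IsStarMOrthogonal M U
  orthV : IsStarMOrthogonal M V
  fdiag : ∀ (i : TI m) (a : Fin n₁) (b : Fin n₂), (a : ℕ) ≠ (b : ℕ) → hat M S i a b = 0
  nonneg : ∀ (i : TI m) (j : Fin (min n₁ n₂)), 0 ≤ hat M S i (dIdx₁ j) (dIdx₂ j)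
  descend : ∀ (i : TI m) (j j' : Fin (min n₁ n₂)), j ≤ j' →
    hat M S i (dIdx₁ j') (dIdx₂ j') ≤ hat M S i (dIdx₁ j) (dIdx₂ j)

/-- The `(j,j)`-singular tube of `S`, as a function of the trailing multi-index. -/
def tube {n₁ n₂ : ℕ} (S : TI m → Matrix (Fin n₁) (Fin n₂) ℝ)
    (j : Fin (min n₁ n₂)) : TI m → ℝ :=
  fun i => S i (dIdx₁ j) (dIdx₂ j)

/-- Frobenius norm of the `(j,j)`-singular tube of `S`. -/
noncomputable def tubeNorm {n₁ n₂ : ℕ} (S : TI m → Matrix (Fin n₁) (Fin n₂) ℝ)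
    (j : Fin (min n₁ n₂)) : ℝ :=
  Real.sqrt (∑ i : TI m, tube S j i ^ 2)

/-- `r` is the t-rank: the number of nonzero singular tubes (tubes `s₁,…,s_r`
are nonzero and the remaining ones vanish). -/
def HasTRank {n₁ n₂ : ℕ} (S : TI m → Matrix (Fin n₁) (Fin n₂) ℝ) (r : ℕ) : Prop :=
  ∀ j : Fin (min n₁ n₂), ((j : ℕ) < r ↔ tube S j ≠ 0)

/-- Keep only the first `k` lateral slices (columns of each frontal slice). -/
def truncCols {n k : ℕ} (hk : k ≤ n) {a : Type}
    (U : TI m → Matrix a (Fin n) ℝ) : TI m → Matrix a (Fin k) ℝ :=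
  fun i => Matrix.of fun r c => U i r (Fin.castLE hk c)

/-- Keep only the leading `k × k` block of each frontal slice. -/
def truncBlock {n₁ n₂ k : ℕ} (h₁ : k ≤ n₁) (h₂ : k ≤ n₂)
    (S : TI m → Matrix (Fin n₁) (Fin n₂) ℝ) : TI m → Matrix (Fin k) (Fin k) ℝ :=
  fun i => Matrix.of fun a b => S i (Fin.castLE h₁ a) (Fin.castLE h₂ b)

/-- The t-rank-`k` truncation `A_k = U_k ⋆M S_k ⋆M V_kᵀ`. -/
noncomputable def truncApprox (M : ∀ k, Matrix (Fin (m k)) (Fin (m k)) ℝ)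
    {n₁ n₂ : ℕ} (U : TI m → Matrix (Fin n₁) (Fin n₁) ℝ)
    (S : TI m → Matrix (Fin n₁) (Fin n₂) ℝ)
    (V : TI m → Matrix (Fin n₂) (Fin n₂) ℝ) (k : ℕ) (hk : k ≤ min n₁ n₂) :
    TI m → Matrix (Fin n₁) (Fin n₂) ℝ :=
  starM M
    (starM M (truncCols (le_trans hk (Nat.min_le_left _ _)) U)
      (truncBlock (le_trans hk (Nat.min_le_left _ _)) (le_trans hk (Nat.min_le_right _ _)) S))
    (transM M (truncCols (le_trans hk (Nat.min_le_right _ _)) V))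

/-- The `j`-th lateral slice `A(:,j,:,…,:)`, as an `n₁ × 1 × n₃ × ⋯ × n_p` tensor. -/
def lateral {n₁ n₂ : ℕ} (A : TI m → Matrix (Fin n₁) (Fin n₂) ℝ) (j : Fin n₂) :
    TI m → Matrix (Fin n₁) (Fin 1) ℝ :=
  fun i => Matrix.of fun r _ => A i r j

/-- The `(j,j)`-singular tube of `S` regarded as a `1 × 1 × n₃ × ⋯ × n_p` tensor. -/
def tubeT {n₁ n₂ : ℕ} (S : TI m → Matrix (Fin n₁) (Fin n₂) ℝ)
    (j : Fin (min n₁ n₂)) : TI m → Matrix (Fin 1) (Fin 1) ℝ :=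
  fun i => Matrix.of fun _ _ => S i (dIdx₁ j) (dIdx₂ j)

end TSVDM

open Module

namespace LinearMap

variable {𝕜 : Type*} [RCLike 𝕜]
  {E : Type*} [NormedAddCommGroup E] [InnerProductSpace 𝕜 E] [FiniteDimensional 𝕜 E]
  {F : Type*} [NormedAddCommGroup F] [InnerProductSpace 𝕜 F] [FiniteDimensional 𝕜 F]

theorem inner_apply_eigenvectorBasis_adjoint_comp_self (T : E →ₗ[𝕜] F) {n : ℕ}
    (hn : finrank 𝕜 E = n) (i j : Fin n) :
    inner 𝕜 (T (T.isSymmetric_adjoint_comp_self.eigenvectorBasis hn i))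
        (T (T.isSymmetric_adjoint_comp_self.eigenvectorBasis hn j)) =
      if i = j then ((T.singularValues j ^ 2 : ℝ) : 𝕜) else 0 := by
  rw [← adjoint_inner_right, ← comp_apply, IsSymmetric.apply_eigenvectorBasis,
    inner_smul_right, orthonormal_iff_ite.mp (OrthonormalBasis.orthonormal _),
    sq_singularValues_fin T hn]
  split_ifs <;> simp

theorem lt_finrank_of_singularValues_ne_zero (T : E →ₗ[𝕜] F) {k : ℕ}
    (hk : T.singularValues k ≠ 0) : k < finrank 𝕜 E ∧ k < finrank 𝕜 F := by
  have hk : k < finrank 𝕜 T.range :=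
    T.singularValues_pos_iff_lt_finrank_range.mp ((T.singularValues_pos_iff_ne_zero k).mpr hk)
  exact ⟨hk.trans_le T.finrank_range_le, hk.trans_le (Submodule.finrank_le _)⟩

theorem exists_orthonormalBasis_inner_apply_eq_singularValues (T : E →ₗ[𝕜] F) {n₁ n₂ : ℕ}
    (h₁ : finrank 𝕜 F = n₁) (h₂ : finrank 𝕜 E = n₂) :
    ∃ (u : OrthonormalBasis (Fin n₁) 𝕜 F) (v : OrthonormalBasis (Fin n₂) 𝕜 E),
      ∀ i j, inner 𝕜 (u i) (T (v j)) = if (i : ℕ) = j then (T.singularValues j : 𝕜) else 0 := by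
  let v := T.isSymmetric_adjoint_comp_self.eigenvectorBasis h₂
  have hσ : ∀ k, T.singularValues k ≠ 0 → k < n₂ ∧ k < n₁ := fun k hk =>
    h₁ ▸ h₂ ▸ T.lt_finrank_of_singularValues_ne_zero hk
  let t : ℕ → F := fun k => if h : k < n₂ then T (v ⟨k, h⟩) else 0
  have ht : ∀ k l, inner 𝕜 (t k) (t l) =
      if k = l then ((T.singularValues l ^ 2 : ℝ) : 𝕜) else 0 := by
    intro k l
    by_cases hk : k < n₂
    · by_cases hl : l < n₂
      · simp only [t, dif_pos hk, dif_pos hl, v, inner_apply_eigenvectorBasis_adjoint_comp_self,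
          Fin.mk.injEq]
      · simp only [t, dif_neg hl, inner_zero_right]
        grind
    · simp only [t, dif_neg hk, inner_zero_left]
      split_ifs with h
      · simp [h ▸ T.singularValues_of_finrank_le (h₂ ▸ not_lt.mp hk)]
      · rfl
  let w : Fin n₁ → F := fun i => (T.singularValues i : 𝕜)⁻¹ • t i
  have hw : Orthonormal 𝕜 ({i : Fin n₁ | T.singularValues i ≠ 0}.domRestrict w) := by
    rw [orthonormal_iff_ite]
    rintro ⟨i, hi⟩ ⟨j, hj⟩
    simp only [Set.domRestrict_apply, w, inner_smul_left, inner_smul_right, ht, Subtype.mk.injEq,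
      Fin.val_inj, RCLike.ofReal_pow, map_inv₀, RCLike.conj_ofReal]
    split_ifs with h
    · subst h
      have : (T.singularValues i : 𝕜) ≠ 0 := RCLike.ofReal_ne_zero.mpr hi
      field_simp
    · simp
  obtain ⟨u, hu⟩ := hw.exists_orthonormalBasis_extension_of_card_eq (by simp [h₁])
  refine ⟨u, v, fun i j => ?_⟩
  have hTv : T (v j) = t j := by simp [t]
  by_cases hj : T.singularValues j = 0
  · have : t j = 0 := inner_self_eq_zero.mp (by rw [ht]; simp [hj])
    simp [hTv, this, hj]
  · let j' : Fin n₁ := ⟨j, (hσ j hj).2⟩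
    have : t j = (T.singularValues j : 𝕜) • u j' := by
      rw [hu j' hj]
      simp [w, j', smul_smul, hj]
    rw [hTv, this, inner_smul_right, orthonormal_iff_ite.mp u.orthonormal]
    simp [j', Fin.ext_iff]

end LinearMap

namespace Matrix

def rectDiagonal {α : Type*} [Zero α] {n₁ n₂ : ℕ} (d : ℕ → α) : Matrix (Fin n₁) (Fin n₂) α :=
  of fun i j => if (i : ℕ) = j then d j else 0

variable {𝕜 : Type*} [RCLike 𝕜]

theorem exists_svd {n₁ n₂ : ℕ} (B : Matrix (Fin n₁) (Fin n₂) 𝕜) :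
    ∃ U ∈ unitaryGroup (Fin n₁) 𝕜, ∃ V ∈ unitaryGroup (Fin n₂) 𝕜,
      B = U * (rectDiagonal fun k => ((toEuclideanLin B).singularValues k : 𝕜) :
        Matrix (Fin n₁) (Fin n₂) 𝕜) * Vᴴ := by
  obtain ⟨u, v, huv⟩ := (toEuclideanLin B).exists_orthonormalBasis_inner_apply_eq_singularValues
    (finrank_euclideanSpace_fin) (finrank_euclideanSpace_fin)
  let e₁ := EuclideanSpace.basisFun (Fin n₁) 𝕜
  let e₂ := EuclideanSpace.basisFun (Fin n₂) 𝕜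
  have hU := e₁.toMatrix_orthonormalBasis_mem_unitary u
  have hV := e₂.toMatrix_orthonormalBasis_mem_unitary v
  refine ⟨_, hU, _, hV, ?_⟩
  have hS : (e₁.toBasis.toMatrix u)ᴴ * B * e₂.toBasis.toMatrix v =
      rectDiagonal (fun k => ((toEuclideanLin B).singularValues k : 𝕜)) := by
    ext i j
    rw [rectDiagonal, of_apply, ← huv, EuclideanSpace.inner_eq_star_dotProduct, Matrix.mul_assoc]
    simp [mul_apply, dotProduct, mulVec, e₁, e₂, Basis.toMatrix_apply, Finset.mul_sum, mul_comm]
  rw [← hS, ← star_eq_conjTranspose, ← star_eq_conjTranspose]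
  simp only [← Matrix.mul_assoc, mem_unitaryGroup_iff.mp hU, Matrix.one_mul]
  rw [Matrix.mul_assoc, mem_unitaryGroup_iff.mp hV, Matrix.mul_one]

section piKronecker

variable {ι R : Type*} {n : ι → Type*} [Fintype ι]

def piKronecker [CommMonoid R] (M : ∀ k, Matrix (n k) (n k) R) :
    Matrix (∀ k, n k) (∀ k, n k) R :=
  of fun i j => ∏ k, M k (i k) (j k)

theorem piKronecker_mul [DecidableEq ι] [∀ k, Fintype (n k)] [CommSemiring R]
    (M N : ∀ k, Matrix (n k) (n k) R) :
    piKronecker M * piKronecker N = piKronecker fun k => M k * N k := by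
  ext i l
  simp only [piKronecker, mul_apply, of_apply, ← Finset.prod_mul_distrib, Fintype.prod_sum]

theorem piKronecker_one [CommSemiring R] [∀ k, DecidableEq (n k)] :
    piKronecker (fun k => (1 : Matrix (n k) (n k) R)) = 1 := by
  ext i j
  simp [piKronecker, one_apply, Finset.prod_boole, funext_iff]

end piKronecker

theorem sum_smul_sum_smul_of_mul_eq_one {ι R V : Type*} [Fintype ι] [DecidableEq ι]
    [CommSemiring R] [AddCommMonoid V] [Module R V] {K L : Matrix ι ι R} (hKL : K * L = 1)
    (X : ι → V) (i : ι) :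
    ∑ j, K i j • ∑ l, L j l • X l = X i := by
  simp_rw [Finset.smul_sum, smul_smul]
  rw [Finset.sum_comm]
  simp_rw [← Finset.sum_smul, ← mul_apply, hKL, one_apply, ite_smul, one_smul, zero_smul]
  simp

end Matrix

namespace TSVDM

variable {q : ℕ} {m : Fin q → ℕ} {M : ∀ k, Matrix (Fin (m k)) (Fin (m k)) ℝ} {a b : Type}

theorem hat_unhat (hM : ∀ k, IsUnit (M k)) (A : TI m → Matrix a b ℝ) :
    hat M (unhat M A) = A := by
  -- `hat M` and `unhat M` act on the family of slices through `piKronecker M` and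
  -- `piKronecker M⁻¹`
  have h : piKronecker M * piKronecker (fun k => (M k)⁻¹) = 1 := by
    simp [piKronecker_mul, mul_nonsing_inv _ ((isUnit_iff_isUnit_det _).mp (hM _)), piKronecker_one]
  exact funext (sum_smul_sum_smul_of_mul_eq_one h A)

theorem unhat_hat (hM : ∀ k, IsUnit (M k)) (A : TI m → Matrix a b ℝ) :
    unhat M (hat M A) = A := by
  have h : piKronecker (fun k => (M k)⁻¹) * piKronecker M = 1 := by
    simp [piKronecker_mul, nonsing_inv_mul _ ((isUnit_iff_isUnit_det _).mp (hM _)), piKronecker_one]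
  exact funext (sum_smul_sum_smul_of_mul_eq_one h A)

theorem hat_injective (hM : ∀ k, IsUnit (M k)) :
    Function.Injective (hat M : (TI m → Matrix a b ℝ) → TI m → Matrix a b ℝ) :=
  Function.LeftInverse.injective (g := unhat M) (unhat_hat hM)

theorem hat_starM (hM : ∀ k, IsUnit (M k)) {c : Type} [Fintype b]
    (A : TI m → Matrix a b ℝ) (B : TI m → Matrix b c ℝ) :
    hat M (starM M A B) = fun i => hat M A i * hat M B i :=
  hat_unhat hM _

theorem hat_transM (hM : ∀ k, IsUnit (M k)) (A : TI m → Matrix a b ℝ) :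
    hat M (transM M A) = fun i => (hat M A i)ᵀ :=
  hat_unhat hM _

theorem isStarMOrthogonal_unhat (hM : ∀ k, IsUnit (M k)) [Fintype a] [DecidableEq a]
    {Q : TI m → Matrix a a ℝ} (hQ : ∀ i, Q i ∈ unitaryGroup a ℝ) :
    IsStarMOrthogonal M (unhat M Q) := by
  have hQt : ∀ i, (Q i)ᵀ = star (Q i) := fun i => by
    rw [star_eq_conjTranspose, conjTranspose_eq_transpose_of_trivial]
  constructor <;> unfold starM idM <;> congr 1 <;> funext i <;>
    simp only [hat_transM hM, hat_unhat hM, hQt]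
  exacts [mem_unitaryGroup_iff'.mp (hQ i), mem_unitaryGroup_iff.mp (hQ i)]

/-- (Existence of the t-SVDM for order-`p` tensors.)
For invertible `M₃, …, M_p`, every order-`p` real tensor `A` admits a
factorization `A = U ⋆M S ⋆M Vᵀ` with `U`, `V` `⋆M`-orthogonal and `S`
f-diagonal with nonnegative, descending transform-domain diagonal entries. -/
theorem exists_tSVDM {q : ℕ} {m : Fin q → ℕ}
    (M : ∀ k, Matrix (Fin (m k)) (Fin (m k)) ℝ) (hM : ∀ k, IsUnit (M k))
    {n₁ n₂ : ℕ} (A : TI m → Matrix (Fin n₁) (Fin n₂) ℝ) :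
    ∃ (U : TI m → Matrix (Fin n₁) (Fin n₁) ℝ)
      (S : TI m → Matrix (Fin n₁) (Fin n₂) ℝ)
      (V : TI m → Matrix (Fin n₂) (Fin n₂) ℝ), IsTSVDM M A U S V := by
  choose U hU V hV hA using fun i => exists_svd (hat M A i)
  let σ : TI m → ℕ → ℝ := fun i => (toEuclideanLin (hat M A i)).singularValues
  let S : TI m → Matrix (Fin n₁) (Fin n₂) ℝ := fun i => rectDiagonal (σ i)
  refine ⟨unhat M U, unhat M S, unhat M V, ?_,
    isStarMOrthogonal_unhat hM hU, isStarMOrthogonal_unhat hM hV, ?_, ?_, ?_⟩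
  · refine hat_injective hM (funext fun i => ?_)
    simp only [hat_starM hM, hat_transM hM, hat_unhat hM]
    rw [hA i, conjTranspose_eq_transpose_of_trivial]
    -- the coercion `ℝ → ℝ` in `exists_svd` is the identity by unfolding
    rfl
  all_goals simp only [hat_unhat hM, S, rectDiagonal, of_apply]
  · intro i a b hab
    simp [hab]
  · intro i j
    simpa [dIdx₁, dIdx₂] using (toEuclideanLin (hat M A i)).singularValues_nonneg j
  · intro i j j' hj
    simpa [dIdx₁, dIdx₂] using (toEuclideanLin (hat M A i)).singularValues_antitone hj

end TSVDM
end

section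
/- (Ordering of singular tubes, part 2.) Let M₃,…,M_p be invertible with each M_k = c_k W_k, c_k ≠ 0 and W_k orthogonal, and let A = U ⋆M S ⋆M Vᵀ be a t-SVDM of A ∈ ℝ^{n₁×n₂×⋯×n_p} with singular tubes s_i = S(i,i,:,…,:). Then the Frobenius norms of the singular tubes are in descending order: ‖s_i‖_F ≥ ‖s_{i+1}‖_F for all 1 ≤ i < min(n₁,n₂); in particular ‖s_1‖_F ≥ ‖s_2‖_F ≥ ⋯ ≥ ‖s_r‖_F > 0 where r is the t-rank of A. -/
open Matrix

/-!
Order-`p` real tensors (`p = q + 2`) are represented as families of frontal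
slices: a tensor `A ∈ ℝ^{n₁ × n₂ × n₃ × ⋯ × n_p}` is a function
`A : TI m → Matrix (Fin n₁) (Fin n₂) ℝ`, where `TI m = ∀ k : Fin q, Fin (m k)`
is the trailing multi-index `(i₃, …, i_p)` and `A i` is the frontal slice
`A(:,:,i₃,…,i_p)`.
-/

namespace TSVDM

variable {q : ℕ} {m : Fin q → ℕ}

/-!
The transform `S ↦ Ŝ` acts on every tube by the Kronecker product `M₃ ⊗ ⋯ ⊗ M_p`, which for
`M_k = c_k W_k` is `∏ c_k` times an orthogonal matrix. Hence `‖ŝ_j‖_F = |∏ c_k| ‖s_j‖_F`, and the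
ordering of the tube norms of `S` is inherited from the entrywise ordering of the diagonals of the
frontal slices of `Ŝ`.
-/

theorem dotProduct_mulVec_self_of_transpose_mul_self {ι κ R : Type*} [Fintype ι] [Fintype κ]
    [DecidableEq κ] [CommSemiring R] {A : Matrix ι κ R} {a : R} (hA : Aᵀ * A = a • 1)
    (v : κ → R) : (A *ᵥ v) ⬝ᵥ (A *ᵥ v) = a * (v ⬝ᵥ v) := by
  rw [dotProduct_mulVec, ← vecMul_transpose, vecMul_vecMul, hA, vecMul_smul, vecMul_one,
    smul_dotProduct, smul_eq_mul]

section Kronecker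

variable {K : Type*} [Fintype K] {ι κ ν : K → Type*} {R : Type*} [CommSemiring R]

def piKron (A : ∀ k, Matrix (ι k) (κ k) R) : Matrix (∀ k, ι k) (∀ k, κ k) R :=
  Matrix.of fun i j => ∏ k, A k (i k) (j k)

theorem piKron_mul [DecidableEq K] [∀ k, Fintype (κ k)] (A : ∀ k, Matrix (ι k) (κ k) R)
    (B : ∀ k, Matrix (κ k) (ν k) R) :
    piKron A * piKron B = piKron fun k => A k * B k := by
  ext i l
  simp only [piKron, Matrix.mul_apply, Matrix.of_apply, ← Finset.prod_mul_distrib]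
  exact (Fintype.prod_sum fun k z => A k (i k) z * B k z (l k)).symm

theorem piKron_transpose (A : ∀ k, Matrix (ι k) (κ k) R) :
    (piKron A)ᵀ = piKron fun k => (A k)ᵀ :=
  rfl

theorem piKron_one [∀ k, DecidableEq (ι k)] [DecidableEq K] :
    piKron (fun k => (1 : Matrix (ι k) (ι k) R)) = 1 := by
  ext i j
  by_cases h : i = j
  · subst h; simp [piKron]
  · obtain ⟨k, hk⟩ := Function.ne_iff.mp h
    simp only [piKron, Matrix.of_apply, Matrix.one_apply_ne h]
    exact Finset.prod_eq_zero (Finset.mem_univ k) (Matrix.one_apply_ne hk)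

theorem piKron_smul (c : K → R) (A : ∀ k, Matrix (ι k) (κ k) R) :
    piKron (fun k => c k • A k) = (∏ k, c k) • piKron A := by
  ext i j
  simp [piKron, Finset.prod_mul_distrib]

theorem piKron_transpose_mul_self_of_smul_orthogonal [DecidableEq K] [∀ k, Fintype (ι k)]
    [∀ k, DecidableEq (ι k)] (c : K → R) {W : ∀ k, Matrix (ι k) (ι k) R}
    (hW : ∀ k, (W k)ᵀ * W k = 1) :
    (piKron fun k => c k • W k)ᵀ * piKron (fun k => c k • W k) = (∏ k, c k) ^ 2 • 1 := by
  rw [piKron_smul, Matrix.transpose_smul, Matrix.smul_mul, Matrix.mul_smul, piKron_transpose,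
    piKron_mul, funext hW, piKron_one, smul_smul, sq]

end Kronecker

theorem tube_hat (M : ∀ k, Matrix (Fin (m k)) (Fin (m k)) ℝ) {n₁ n₂ : ℕ}
    (S : TI m → Matrix (Fin n₁) (Fin n₂) ℝ) (j : Fin (min n₁ n₂)) :
    tube (hat M S) j = piKron M *ᵥ tube S j := by
  ext i
  simp [tube, hat, Matrix.sum_apply, mulVec, dotProduct, piKron]

theorem tubeNorm_eq_sqrt_dotProduct {n₁ n₂ : ℕ} (S : TI m → Matrix (Fin n₁) (Fin n₂) ℝ)
    (j : Fin (min n₁ n₂)) : tubeNorm S j = √(tube S j ⬝ᵥ tube S j) := by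
  simp only [tubeNorm, dotProduct, sq]

theorem tubeNorm_hat_smul_orthogonal (c : Fin q → ℝ) {W : ∀ k, Matrix (Fin (m k)) (Fin (m k)) ℝ}
    (hW : ∀ k, (W k)ᵀ * W k = 1) {n₁ n₂ : ℕ} (S : TI m → Matrix (Fin n₁) (Fin n₂) ℝ)
    (j : Fin (min n₁ n₂)) :
    tubeNorm (hat (fun k => c k • W k) S) j = |∏ k, c k| * tubeNorm S j := by
  rw [tubeNorm_eq_sqrt_dotProduct, tubeNorm_eq_sqrt_dotProduct, tube_hat,
    dotProduct_mulVec_self_of_transpose_mul_self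
      (piKron_transpose_mul_self_of_smul_orthogonal c hW),
    Real.sqrt_mul (sq_nonneg _), Real.sqrt_sq_eq_abs]

theorem tubeNorm_pos_of_tube_ne_zero {n₁ n₂ : ℕ} {S : TI m → Matrix (Fin n₁) (Fin n₂) ℝ}
    {j : Fin (min n₁ n₂)} (h : tube S j ≠ 0) : 0 < tubeNorm S j := by
  rw [tubeNorm_eq_sqrt_dotProduct, Real.sqrt_pos]
  simpa only [star_trivial] using dotProduct_self_star_pos_iff.mpr h

theorem IsTSVDM.tubeNorm_hat_antitone {M : ∀ k, Matrix (Fin (m k)) (Fin (m k)) ℝ} {n₁ n₂ : ℕ}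
    {A : TI m → Matrix (Fin n₁) (Fin n₂) ℝ} {U : TI m → Matrix (Fin n₁) (Fin n₁) ℝ}
    {S : TI m → Matrix (Fin n₁) (Fin n₂) ℝ} {V : TI m → Matrix (Fin n₂) (Fin n₂) ℝ}
    (hSVD : IsTSVDM M A U S V) : Antitone (tubeNorm (hat M S)) := fun j j' hjj' =>
  Real.sqrt_le_sqrt <| Finset.sum_le_sum fun i _ =>
    pow_le_pow_left₀ (hSVD.nonneg i j') (hSVD.descend i j j' hjj') 2

/-- (Ordering of singular tubes, part 2.)
The Frobenius norms of the singular tubes are in descending order, and the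
first `r` of them (where `r` is the t-rank) are positive. -/
theorem tubeNorm_descending_and_pos {q : ℕ} {m : Fin q → ℕ}
    (M : ∀ k, Matrix (Fin (m k)) (Fin (m k)) ℝ)
    (c : Fin q → ℝ) (W : ∀ k, Matrix (Fin (m k)) (Fin (m k)) ℝ)
    (hc : ∀ k, c k ≠ 0)
    (hW : ∀ k, W k * (W k)ᵀ = 1 ∧ (W k)ᵀ * W k = 1)
    (hM : ∀ k, M k = c k • W k)
    {n₁ n₂ : ℕ} (A : TI m → Matrix (Fin n₁) (Fin n₂) ℝ)
    (U : TI m → Matrix (Fin n₁) (Fin n₁) ℝ)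
    (S : TI m → Matrix (Fin n₁) (Fin n₂) ℝ)
    (V : TI m → Matrix (Fin n₂) (Fin n₂) ℝ)
    (hSVD : IsTSVDM M A U S V) (r : ℕ) (hr : HasTRank S r) :
    (∀ j j' : Fin (min n₁ n₂), j ≤ j' → tubeNorm S j' ≤ tubeNorm S j) ∧
    (∀ j : Fin (min n₁ n₂), (j : ℕ) < r → 0 < tubeNorm S j) := by
  obtain rfl : M = fun k => c k • W k := funext hM
  have hscale : 0 < |∏ k, c k| := abs_pos.mpr (Finset.prod_ne_zero_iff.mpr fun k _ => hc k)
  refine ⟨fun j j' hjj' => ?_, fun j hj => tubeNorm_pos_of_tube_ne_zero ((hr j).mp hj)⟩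
  have hhat := hSVD.tubeNorm_hat_antitone hjj'
  simp only [tubeNorm_hat_smul_orthogonal c fun k => (hW k).2] at hhat
  exact le_of_mul_le_mul_left hhat hscale

end TSVDM
end
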